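/- arXiv:2108.04586 — 2 statements merged into one kernel-verified Lean document; each statement's English description precedes it below -/
import Mathlib

section
/- Proposition 2 (index-partition equals data-partition). Let expr_G be a symbolic multidimensional expression satisfying the assumptions of Lemmas 1 and 2 (every leaf-to-root path passes through at least one sum operator, and for every leaf the union of the global index tuples of the sum operators on its path equals G). Fix an index k ∈ {1,…,N} and a subset P ⊆ space(g_k). Then running the exhaustive instantiation algorithm (Algorithm 1) only over the restricted set of global index tuples {(g*_1,…,g*_N) ∈ space(G) : g*_k ∈ P} produces exactly the same set of instantiated constraint rows as running the context-passing instantiation algorithm (Algorithm 2) on the restricted set data in which every set S_i* whose index tuples contain the placeholder g_k is replaced by its subset of tuples whose g_k-component lies in P. -/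
/-- A symbolic multidimensional expression tree.  Leaf nodes are *terms*, consisting of
a rational coefficient and a variable whose indices are determined (as functions) by the
values of the index placeholders recorded in a context `ℕ → Option V`.  Non-leaf nodes are
binary add/subtract operators and unary sum operators; a sum operator carries its logical
condition `(Gk ‖ Lk) ∈ data`, where `Gk` is the tuple of global index placeholders,
`Lk` the tuple of local index placeholders, and `data` the instantiating finite set of
index tuples. -/
inductive GExpr (V Var : Type) : Type where
  | term (coef : (ℕ → Option V) → ℚ) (var : (ℕ → Option V) → Var) : GExpr V Var
  | add (l r : GExpr V Var) : GExpr V Var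
  | sub (l r : GExpr V Var) : GExpr V Var
  | sum (Gk Lk : List ℕ) (data : Finset (List V)) (body : GExpr V Var) : GExpr V Var

variable {V Var : Type}

/-- Extend a context by binding the placeholder names `names` to the values `vals`
(componentwise). -/
def bindCtx (ctx : ℕ → Option V) (names : List ℕ) (vals : List V) : ℕ → Option V :=
  fun p => match (names.zip vals).find? (fun q => q.1 == p) with
    | some q => some q.2
    | none => ctx p

/-- `agreesB ctx names vals` holds iff the value tuple `vals` agrees with the context `ctx`
on every placeholder of `names` that is already bound in `ctx`. -/
def agreesB [DecidableEq V] (ctx : ℕ → Option V) (names : List ℕ) (vals : List V) : Bool :=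
  (names.zip vals).all (fun q => match ctx q.1 with
    | some a => decide (q.2 = a)
    | none => true)

/-- Algorithm 1 (exhaustive instantiation), evaluation of one row: given a context that binds
all global index placeholders to a concrete tuple `G*`, evaluate the expression tree to the
linear expression `expr_{G*}`, represented as the function assigning to each variable its
coefficient.  A sum operator is evaluated as the sum of its operand over all tuples of its
set data whose `Gk`-components equal the corresponding components of `G*`, with the
`Lk`-components bound as the values of the local index placeholders. -/
def evalFull [DecidableEq V] [DecidableEq Var] :
    GExpr V Var → (ℕ → Option V) → Var → ℚ
  | .term c v, ctx => fun w => if w = v ctx then c ctx else 0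
  | .add l r, ctx => fun w => evalFull l ctx w + evalFull r ctx w
  | .sub l r, ctx => fun w => evalFull l ctx w - evalFull r ctx w
  | .sum Gk Lk data body, ctx => fun w =>
      ∑ tup ∈ data.filter (fun tup => agreesB ctx Gk (tup.take Gk.length) = true),
        evalFull body (bindCtx ctx (Gk ++ Lk) tup) w

/-- Algorithm 2 (context-passing instantiation), with aggregation of tagged terms built in:
starting from a (partial) context, traverse the tree once; at a sum operator iterate over
those tuples of the set data that agree with the context on the already-bound placeholders
of `Gk`, extending the context by the bindings `Gk := Gk*`, `Lk := Lk*`; at a subtract node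
negate the right operand's terms; at a leaf emit the term tagged with the context's values
of all global placeholders `Glist`.  `evalTagged Glist e ctx tag w` is the aggregated
coefficient of variable `w` in the constraint row indexed by `tag`. -/
def evalTagged [DecidableEq V] [DecidableEq Var] (Glist : List ℕ) :
    GExpr V Var → (ℕ → Option V) → List (Option V) → Var → ℚ
  | .term c v, ctx => fun tag w => if tag = Glist.map ctx ∧ w = v ctx then c ctx else 0
  | .add l r, ctx => fun tag w => evalTagged Glist l ctx tag w + evalTagged Glist r ctx tag w
  | .sub l r, ctx => fun tag w => evalTagged Glist l ctx tag w - evalTagged Glist r ctx tag w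
  | .sum Gk Lk data body, ctx => fun tag w =>
      ∑ tup ∈ data.filter (fun tup => agreesB ctx Gk (tup.take Gk.length) = true),
        evalTagged Glist body (bindCtx ctx (Gk ++ Lk) tup) tag w

/-- `spaceTuples sp names` is `space(G)` for the tuple `names` of placeholders: the finite
set of tuples whose `j`-th component ranges over the admissible values `sp (names j)`. -/
def spaceTuples [DecidableEq V] (sp : ℕ → Finset V) : List ℕ → Finset (List V)
  | [] => {[]}
  | g :: gs => ((sp g) ×ˢ spaceTuples sp gs).image (fun p => p.1 :: p.2)

/-- The full context binding the global placeholders `Glist` to the concrete tuple `Gstar`. -/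
def fullCtx (Glist : List ℕ) (Gstar : List V) : ℕ → Option V :=
  bindCtx (fun _ => none) Glist Gstar

/-- One-hole contexts for expression trees, used to designate the position of a node. -/
inductive GCtx (V Var : Type) : Type where
  | hole : GCtx V Var
  | addL (c : GCtx V Var) (r : GExpr V Var) : GCtx V Var
  | addR (l : GExpr V Var) (c : GCtx V Var) : GCtx V Var
  | subL (c : GCtx V Var) (r : GExpr V Var) : GCtx V Var
  | subR (l : GExpr V Var) (c : GCtx V Var) : GCtx V Var
  | sumC (Gk Lk : List ℕ) (data : Finset (List V)) (c : GCtx V Var) : GCtx V Var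

/-- Plug an expression into the hole of a one-hole context. -/
def GCtx.plug : GCtx V Var → GExpr V Var → GExpr V Var
  | .hole, e => e
  | .addL c r, e => .add (c.plug e) r
  | .addR l c, e => .add l (c.plug e)
  | .subL c r, e => .sub (c.plug e) r
  | .subR l c, e => .sub l (c.plug e)
  | .sumC Gk Lk d c, e => .sum Gk Lk d (c.plug e)

/-- The path from the hole to the root contains no sum operator. -/
def GCtx.noSum : GCtx V Var → Prop
  | .hole => True
  | .addL c _ => c.noSum
  | .addR _ c => c.noSum
  | .subL c _ => c.noSum
  | .subR _ c => c.noSum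
  | .sumC _ _ _ _ => False

/-- The global index placeholder tuples `Gk` of the sum operators on the path from the
hole to the root. -/
def GCtx.spineGks : GCtx V Var → List (List ℕ)
  | .hole => []
  | .addL c _ => c.spineGks
  | .addR _ c => c.spineGks
  | .subL c _ => c.spineGks
  | .subR _ c => c.spineGks
  | .sumC Gk _ _ c => Gk :: c.spineGks

/-- Every path from a leaf node to the root passes through at least one sum operator
(the assumption justified by Lemma 1). -/
def GExpr.allUnderSum : GExpr V Var → Prop
  | .term _ _ => False
  | .add l r => l.allUnderSum ∧ r.allUnderSum
  | .sub l r => l.allUnderSum ∧ r.allUnderSum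
  | .sum _ _ _ _ => True

/-- Well-formedness of a symbolic expression w.r.t. the global placeholder tuple `Glist`:
at every sum operator, `Gk` is a tuple of placeholders from `Glist`, the local placeholders
`Lk` are disjoint from the globals, both tuples consist of distinct placeholders, and every
tuple of the set data has length `|Gk| + |Lk|`. -/
def GExpr.wf (Glist : List ℕ) : GExpr V Var → Prop
  | .term _ _ => True
  | .add l r => l.wf Glist ∧ r.wf Glist
  | .sub l r => l.wf Glist ∧ r.wf Glist
  | .sum Gk Lk data body =>
      (∀ g ∈ Gk, g ∈ Glist) ∧ (∀ l ∈ Lk, l ∉ Glist) ∧ Gk.Nodup ∧ Lk.Nodup ∧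
      (∀ tup ∈ data, tup.length = Gk.length + Lk.length) ∧ body.wf Glist

/-- For every leaf node, the union of the global placeholder tuples `Gk` of the sum
operators on its path to the root covers all of `Glist` (the assumption justified by
Lemma 2); `acc` accumulates the globals bound so far. -/
def GExpr.covers (Glist : List ℕ) : GExpr V Var → List ℕ → Prop
  | .term _ _, acc => ∀ g ∈ Glist, g ∈ acc
  | .add l r, acc => l.covers Glist acc ∧ r.covers Glist acc
  | .sub l r, acc => l.covers Glist acc ∧ r.covers Glist acc
  | .sum Gk _ _ body, acc => body.covers Glist (acc ++ Gk)

/-- Lemma 2's data expansion: replace every tuple of `data` by all its expansions inserting,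
after the first `nG` (global) components, one value from `vals`. -/
def expandData [DecidableEq V] (data : Finset (List V)) (nG : ℕ) (vals : Finset V) :
    Finset (List V) :=
  (data ×ˢ vals).image (fun p => p.1.take nG ++ p.2 :: p.1.drop nG)

/-- Proposition 2's data restriction w.r.t. the global placeholder `gk` and the admissible
subset `P`: every set data whose index tuples contain the placeholder `gk` is replaced by
its subset of tuples whose `gk`-component lies in `P`. -/
def GExpr.restrict [DecidableEq V] (gk : ℕ) (P : Finset V) : GExpr V Var → GExpr V Var
  | .term c v => .term c v
  | .add l r => .add (l.restrict gk P) (r.restrict gk P)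
  | .sub l r => .sub (l.restrict gk P) (r.restrict gk P)
  | .sum Gk Lk data body =>
      if gk ∈ Gk ++ Lk then
        .sum Gk Lk
          (data.filter (fun tup => ((tup[(Gk ++ Lk).idxOf gk]?).any fun a => decide (a ∈ P)) = true))
          (body.restrict gk P)
      else .sum Gk Lk data (body.restrict gk P)

/-!
Fix a row `G*` and let `ctx₀` bind the global placeholders to `G*`. Algorithm 2 only ever
extends its context, so once a sum operator binds a global placeholder to a value other than
its `G*`-value, nothing below it contributes to row `G*`. Restricting the data of `g_k` to `P`
therefore only removes contributions to rows with `G*_k ∉ P`: if `G*_k ∈ P` the row is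
unchanged, and if `G*_k ∉ P` every leaf is reached with `g_k` unbound or bound inside `P`, so
the row is empty. For the unrestricted data, Algorithm 2 sums over more tuples than
Algorithm 1 only where a global is still unbound in its context; the extra tuples bind it
against `G*` and contribute nothing, and at a leaf coverage makes the two contexts equal.
-/

namespace bindCtx

variable (ctx : ℕ → Option V)

@[simp] lemma nil_left (vals : List V) : bindCtx ctx [] vals = ctx := rfl

@[simp] lemma nil_right (names : List ℕ) : bindCtx ctx names ([] : List V) = ctx := by
  funext p; simp [bindCtx]

lemma cons_cons (n : ℕ) (ns : List ℕ) (v : V) (vs : List V) :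
    bindCtx ctx (n :: ns) (v :: vs) = Function.update (bindCtx ctx ns vs) n (some v) := by
  funext p
  by_cases h : p = n
  · subst h; simp [bindCtx]
  · simp [bindCtx, h, Ne.symm h]

variable {ctx}

lemma apply_of_not_mem {names : List ℕ} {p : ℕ} (vals : List V) (hp : p ∉ names) :
    bindCtx ctx names vals p = ctx p := by
  induction names generalizing vals with
  | nil => rfl
  | cons n ns ih =>
    cases vals with
    | nil => simp
    | cons v vs =>
      rw [List.mem_cons, not_or] at hp
      rw [cons_cons, Function.update_of_ne hp.1, ih vs hp.2]

lemma apply_of_mem {names : List ℕ} {vals : List V} {p : ℕ} (hp : p ∈ names)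
    (hlen : names.length ≤ vals.length) :
    bindCtx ctx names vals p = vals[names.idxOf p]? := by
  induction names generalizing vals with
  | nil => simp at hp
  | cons n ns ih =>
    cases vals with
    | nil => simp at hlen
    | cons v vs =>
      rw [cons_cons]
      by_cases h : p = n
      · subst h; simp
      · rw [Function.update_of_ne h, List.idxOf_cons_ne _ (Ne.symm h)]
        exact ih (List.mem_of_ne_of_mem h hp) (by simpa using hlen)

lemma apply_ne_none_of_mem {names : List ℕ} {vals : List V} {p : ℕ} (hp : p ∈ names)
    (hlen : names.length ≤ vals.length) : bindCtx ctx names vals p ≠ none := by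
  rw [apply_of_mem hp hlen, Ne, List.getElem?_eq_none_iff, not_le]
  exact (List.idxOf_lt_length_iff.mpr hp).trans_le hlen

lemma append_apply_of_not_mem {p : ℕ} (n₁ n₂ : List ℕ) (vals : List V) (hp : p ∉ n₂) :
    bindCtx ctx (n₁ ++ n₂) vals p = bindCtx ctx n₁ (vals.take n₁.length) p := by
  induction n₁ generalizing vals with
  | nil => exact apply_of_not_mem vals hp
  | cons n ns ih =>
    cases vals with
    | nil => simp
    | cons v vs =>
      simp only [List.cons_append, List.length_cons, List.take_succ_cons, cons_cons,
        Function.update_apply, ih]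

lemma mono {ctx' : ℕ → Option V} (h : ∀ p b, ctx p = some b → ctx' p = some b)
    (names : List ℕ) (vals : List V) :
    ∀ p b, bindCtx ctx names vals p = some b → bindCtx ctx' names vals p = some b := by
  intro p b hb
  unfold bindCtx at hb ⊢
  split at hb <;> simp_all

end bindCtx

lemma agreesB_cons_cons [DecidableEq V] (ctx : ℕ → Option V) (n : ℕ) (ns : List ℕ) (v : V)
    (vs : List V) :
    agreesB ctx (n :: ns) (v :: vs) = true ↔
      (∀ b, ctx n = some b → v = b) ∧ agreesB ctx ns vs = true := by
  simp only [agreesB, List.zip_cons_cons, List.all_cons, Bool.and_eq_true]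
  cases ctx n <;> simp

lemma agreesB_iff_forall_bindCtx [DecidableEq V] {ctx : ℕ → Option V} {names : List ℕ}
    (vals : List V) (hnd : names.Nodup) :
    agreesB ctx names vals = true ↔
      ∀ p b, ctx p = some b → bindCtx ctx names vals p = some b := by
  induction names generalizing vals with
  | nil => simp [agreesB]
  | cons n ns ih =>
    cases vals with
    | nil => simp [agreesB]
    | cons v vs =>
      rw [List.nodup_cons] at hnd
      simp only [agreesB_cons_cons, ih vs hnd.2, bindCtx.cons_cons, Function.update_apply]
      constructor
      · rintro ⟨hn, hns⟩ p b hb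
        split_ifs with h
        · subst h; rw [hn b hb]
        · exact hns p b hb
      · intro h
        refine ⟨fun b hb => by simpa using h n b hb, fun p b hb => ?_⟩
        by_cases hpn : p = n
        · subst hpn; rwa [bindCtx.apply_of_not_mem vs hnd.1]
        · simpa [hpn] using h p b hb

lemma agreesB_of_le [DecidableEq V] {ctx ctx' : ℕ → Option V}
    (h : ∀ p b, ctx p = some b → ctx' p = some b) (names : List ℕ) (vals : List V)
    (hag : agreesB ctx' names vals = true) : agreesB ctx names vals = true := by
  simp only [agreesB, List.all_eq_true] at hag ⊢
  intro q hq
  specialize hag q hq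
  cases hc : ctx q.1 with
  | none => rfl
  | some b => simpa [h _ _ hc] using hag

lemma bindCtx_append_of_agreesB [DecidableEq V] {ctx : ℕ → Option V} {Gk Lk : List ℕ}
    {tup : List V} {p : ℕ} (hnd : Gk.Nodup) (hag : agreesB ctx Gk (tup.take Gk.length) = true)
    (hp : p ∉ Lk) (hbound : ctx p ≠ none) : bindCtx ctx (Gk ++ Lk) tup p = ctx p := by
  obtain ⟨b, hb⟩ := Option.ne_none_iff_exists'.mp hbound
  rw [bindCtx.append_apply_of_not_mem _ _ _ hp, hb]
  exact (agreesB_iff_forall_bindCtx _ hnd).mp hag p b hb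

lemma length_of_mem_spaceTuples [DecidableEq V] {sp : ℕ → Finset V} {names : List ℕ}
    {t : List V} (ht : t ∈ spaceTuples sp names) : t.length = names.length := by
  induction names generalizing t with
  | nil => simp_all [spaceTuples]
  | cons n ns ih =>
    simp only [spaceTuples, Finset.mem_image, Finset.mem_product] at ht
    obtain ⟨⟨b, t'⟩, ⟨-, ht'⟩, rfl⟩ := ht
    simp [ih ht']

lemma fullCtx_getElem {Glist : List ℕ} {Gstar : List V} (hnd : Glist.Nodup)
    (hlen : Gstar.length = Glist.length) {i : ℕ} (hi : i < Glist.length) :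
    fullCtx Glist Gstar Glist[i] = Gstar[i]? := by
  rw [fullCtx, bindCtx.apply_of_mem (List.getElem_mem hi) hlen.ge, hnd.idxOf_getElem]

lemma map_fullCtx {Glist : List ℕ} {Gstar : List V} (hnd : Glist.Nodup)
    (hlen : Gstar.length = Glist.length) :
    Glist.map (fullCtx Glist Gstar) = Gstar.map some :=
  List.ext_getElem (by simp [hlen]) fun i hi _ => by
    simp [fullCtx_getElem hnd hlen (by simpa using hi)]

section Rows

variable [DecidableEq V] [DecidableEq Var] {Glist : List ℕ}

/-- Sum operators only bind tuples that agree with the context, so a bound global keeps its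
value all the way down to the leaves. -/
lemma evalTagged_eq_zero_of_ne {e : GExpr V Var} (hwf : e.wf Glist) {g : ℕ} (hg : g ∈ Glist)
    {ctx ctx₀ : ℕ → Option V} (hbound : ctx g ≠ none) (hne : ctx g ≠ ctx₀ g) (w : Var) :
    evalTagged Glist e ctx (Glist.map ctx₀) w = 0 := by
  induction e generalizing ctx with
  | term c v =>
    simp only [evalTagged]
    rw [if_neg]
    rintro ⟨htag, -⟩
    exact hne (List.map_inj_left.mp htag g hg).symm
  | add l r ihl ihr =>
    simp only [evalTagged, ihl hwf.1 hbound hne, ihr hwf.2 hbound hne, add_zero]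
  | sub l r ihl ihr =>
    simp only [evalTagged, ihl hwf.1 hbound hne, ihr hwf.2 hbound hne, sub_zero]
  | sum Gk Lk data body ih =>
    obtain ⟨-, hL, hGnd, -, -, hbwf⟩ := hwf
    refine Finset.sum_eq_zero fun tup htup => ?_
    have hkeep := bindCtx_append_of_agreesB hGnd (Finset.mem_filter.mp htup).2
      (fun h => hL g h hg) hbound
    exact ih hbwf (hkeep ▸ hbound) (hkeep ▸ hne)

/-- A tuple that disagrees with `ctx₀` binds some global placeholder against `ctx₀`. -/
lemma evalTagged_bindCtx_eq_zero_of_not_agreesB {Gk Lk : List ℕ} {data : Finset (List V)}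
    {body : GExpr V Var} (hwf : (GExpr.sum Gk Lk data body).wf Glist) {tup : List V}
    (htup : tup ∈ data) {ctx ctx₀ : ℕ → Option V}
    (hnag : ¬agreesB ctx₀ Gk (tup.take Gk.length) = true) (w : Var) :
    evalTagged Glist body (bindCtx ctx (Gk ++ Lk) tup) (Glist.map ctx₀) w = 0 := by
  obtain ⟨hG, hL, hGnd, -, hdlen, hbwf⟩ := hwf
  rw [agreesB_iff_forall_bindCtx _ hGnd] at hnag
  push Not at hnag
  obtain ⟨p, b, hb, hne⟩ := hnag
  have hpG : p ∈ Gk := by_contra fun h => hne (by rwa [bindCtx.apply_of_not_mem _ h])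
  have htake : Gk.length ≤ (tup.take Gk.length).length := by simp [hdlen tup htup]
  have hval : bindCtx ctx (Gk ++ Lk) tup p = bindCtx ctx₀ Gk (tup.take Gk.length) p := by
    rw [bindCtx.append_apply_of_not_mem _ _ _ fun h => hL p h (hG p hpG),
      bindCtx.apply_of_mem hpG htake, bindCtx.apply_of_mem hpG htake]
  refine evalTagged_eq_zero_of_ne hbwf (hG p hpG) ?_ ?_ w
  · rw [hval]; exact bindCtx.apply_ne_none_of_mem hpG htake
  · rwa [hval, hb]

lemma evalTagged_restrict_of_mem {e : GExpr V Var} (hwf : e.wf Glist) {g : ℕ} (hg : g ∈ Glist)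
    {ctx₀ : ℕ → Option V} {a : V} (ha : ctx₀ g = some a) {P : Finset V} (haP : a ∈ P)
    (ctx : ℕ → Option V) (w : Var) :
    evalTagged Glist (e.restrict g P) ctx (Glist.map ctx₀) w =
      evalTagged Glist e ctx (Glist.map ctx₀) w := by
  induction e generalizing ctx with
  | term c v => rfl
  | add l r ihl ihr => simp only [GExpr.restrict, evalTagged, ihl hwf.1, ihr hwf.2]
  | sub l r ihl ihr => simp only [GExpr.restrict, evalTagged, ihl hwf.1, ihr hwf.2]
  | sum Gk Lk data body ih =>
    obtain ⟨-, -, -, -, hdlen, hbwf⟩ := hwf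
    simp only [GExpr.restrict]
    split_ifs with hmem
    · simp only [evalTagged, ih hbwf]
      rw [Finset.filter_comm]
      refine Finset.sum_filter_of_ne fun tup htup hne => ?_
      have hlen : (Gk ++ Lk).length ≤ tup.length := by
        simp [hdlen tup (Finset.mem_filter.mp htup).1]
      rw [← bindCtx.apply_of_mem (ctx := ctx) hmem hlen]
      by_contra hout
      refine hne (evalTagged_eq_zero_of_ne hbwf hg (bindCtx.apply_ne_none_of_mem hmem hlen) ?_ w)
      intro h
      rw [h, ha] at hout
      simp [haP] at hout
    · simp only [evalTagged, ih hbwf]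

lemma evalTagged_restrict_eq_zero {e : GExpr V Var} (hwf : e.wf Glist) {g : ℕ} (hg : g ∈ Glist)
    {ctx₀ : ℕ → Option V} {a : V} (ha : ctx₀ g = some a) {P : Finset V} (haP : a ∉ P)
    {ctx : ℕ → Option V} (hctx : ctx g ≠ some a) (w : Var) :
    evalTagged Glist (e.restrict g P) ctx (Glist.map ctx₀) w = 0 := by
  induction e generalizing ctx with
  | term c v =>
    simp only [GExpr.restrict, evalTagged]
    rw [if_neg]
    rintro ⟨htag, -⟩
    exact hctx (ha ▸ (List.map_inj_left.mp htag g hg).symm)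
  | add l r ihl ihr =>
    simp only [GExpr.restrict, evalTagged, ihl hwf.1 hctx, ihr hwf.2 hctx, add_zero]
  | sub l r ihl ihr =>
    simp only [GExpr.restrict, evalTagged, ihl hwf.1 hctx, ihr hwf.2 hctx, sub_zero]
  | sum Gk Lk data body ih =>
    obtain ⟨-, -, -, -, hdlen, hbwf⟩ := hwf
    simp only [GExpr.restrict]
    split_ifs with hmem
    · refine Finset.sum_eq_zero fun tup htup => ih hbwf ?_
      simp only [Finset.mem_filter] at htup
      obtain ⟨⟨hdata, hsel⟩, -⟩ := htup
      rw [bindCtx.apply_of_mem hmem (by simp [hdlen tup hdata])]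
      intro h
      rw [h] at hsel
      simp [haP] at hsel
    · exact Finset.sum_eq_zero fun tup _ => ih hbwf (by rwa [bindCtx.apply_of_not_mem _ hmem])

/-- Proposition 1 (Algorithms 1 and 2 produce the same rows), generalised to the pairs of
contexts met during the traversal. -/
lemma evalTagged_eq_evalFull {e : GExpr V Var} (hwf : e.wf Glist) {acc : List ℕ}
    (hcov : e.covers Glist acc) {ctx ctx₀ : ℕ → Option V}
    (hbound : ∀ p ∈ Glist, ctx₀ p ≠ none) (hle : ∀ p b, ctx p = some b → ctx₀ p = some b)
    (hacc : ∀ p, p ∉ Glist ∨ p ∈ acc → ctx p = ctx₀ p) (w : Var) :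
    evalTagged Glist e ctx (Glist.map ctx₀) w = evalFull e ctx₀ w := by
  induction e generalizing acc ctx ctx₀ with
  | term c v =>
    obtain rfl : ctx = ctx₀ := funext fun p => hacc p ((em' (p ∈ Glist)).imp_right (hcov p))
    simp [evalTagged, evalFull]
  | add l r ihl ihr =>
    simp only [evalTagged, evalFull, ihl hwf.1 hcov.1 hbound hle hacc,
      ihr hwf.2 hcov.2 hbound hle hacc]
  | sub l r ihl ihr =>
    simp only [evalTagged, evalFull, ihl hwf.1 hcov.1 hbound hle hacc,
      ihr hwf.2 hcov.2 hbound hle hacc]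
  | sum Gk Lk data body ih =>
    have ⟨_, hL, hGnd, _, hdlen, hbwf⟩ := hwf
    simp only [evalTagged, evalFull]
    have hsub : data.filter (fun tup => agreesB ctx₀ Gk (tup.take Gk.length) = true) ⊆
        data.filter (fun tup => agreesB ctx Gk (tup.take Gk.length) = true) := fun tup ht => by
      simp only [Finset.mem_filter] at ht ⊢
      exact ⟨ht.1, agreesB_of_le hle _ _ ht.2⟩
    rw [← Finset.sum_subset hsub fun tup ht hnot => ?_]
    · refine Finset.sum_congr rfl fun tup htup => ?_
      obtain ⟨hdata, hag⟩ := Finset.mem_filter.mp htup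
      have hkeep : ∀ p ∈ Glist, bindCtx ctx₀ (Gk ++ Lk) tup p = ctx₀ p := fun p hp =>
        bindCtx_append_of_agreesB hGnd hag (fun h => hL p h hp) (hbound p hp)
      rw [← List.map_congr_left hkeep]
      refine ih hbwf hcov (fun p hp => hkeep p hp ▸ hbound p hp)
        (bindCtx.mono hle _ _) fun p hp => ?_
      by_cases hp' : p ∈ Gk ++ Lk
      · have hlen : (Gk ++ Lk).length ≤ tup.length := by simp [hdlen tup hdata]
        rw [bindCtx.apply_of_mem hp' hlen, bindCtx.apply_of_mem hp' hlen]
      · rw [bindCtx.apply_of_not_mem _ hp', bindCtx.apply_of_not_mem _ hp']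
        exact hacc p (hp.imp_right fun h => (List.mem_append.mp h).resolve_right
          fun hG => hp' (List.mem_append_left _ hG))
    · have hdata := (Finset.mem_filter.mp ht).1
      exact evalTagged_bindCtx_eq_zero_of_not_agreesB hwf hdata
        (fun h => hnot (Finset.mem_filter.mpr ⟨hdata, h⟩)) w

end Rows

theorem index_partition_eq_data_partition_general [DecidableEq V] [DecidableEq Var]
    (sp : ℕ → Finset V) (Glist : List ℕ) (hnd : Glist.Nodup)
    (e : GExpr V Var) (hwf : e.wf Glist)
    (hcov : e.covers Glist [])
    (k : Fin Glist.length) (P : Finset V) :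
    ∀ Gstar ∈ spaceTuples sp Glist, ∀ a : V, Gstar[(k : ℕ)]? = some a →
      (a ∈ P → ∀ w : Var,
          evalTagged Glist (e.restrict (Glist.get k) P) (fun _ => none) (Gstar.map some) w =
          evalFull e (fullCtx Glist Gstar) w) ∧
      (a ∉ P → ∀ w : Var,
          evalTagged Glist (e.restrict (Glist.get k) P) (fun _ => none) (Gstar.map some) w
            = 0) := by
  intro Gstar hGstar a ha
  have hlen := length_of_mem_spaceTuples hGstar
  have hg : Glist.get k ∈ Glist := List.get_mem _ _
  have hka : fullCtx Glist Gstar (Glist.get k) = some a := (fullCtx_getElem hnd hlen k.2).trans ha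
  rw [← map_fullCtx hnd hlen]
  refine ⟨fun haP w => ?_, fun haP w => evalTagged_restrict_eq_zero hwf hg hka haP (by simp) w⟩
  rw [evalTagged_restrict_of_mem hwf hg hka haP]
  refine evalTagged_eq_evalFull hwf hcov (fun p hp => bindCtx.apply_ne_none_of_mem hp hlen.ge)
    (fun _ _ h => (Option.some_ne_none _ h.symm).elim) (fun p hp => ?_) w
  rw [List.mem_nil_iff, or_false] at hp
  exact (bindCtx.apply_of_not_mem (ctx := fun _ => none) Gstar hp).symm

/-- **Proposition 2 (index-partition equals data-partition).**  Let `e` be a symbolic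
multidimensional expression with global placeholder tuple `Glist` satisfying the
assumptions of Lemmas 1 and 2 (`e.allUnderSum`, `e.covers Glist []`, well-formedness
`e.wf Glist`).  Fix a position `k` of the global tuple (placeholder `g_k = Glist.get k`)
and a subset `P ⊆ space(g_k)`.  Then running the exhaustive instantiation algorithm
(Algorithm 1) only over the restricted set of global index tuples
`{G* ∈ space(G) : G*_k ∈ P}` produces exactly the same set of instantiated constraint rows
as running the context-passing instantiation algorithm (Algorithm 2) on the restricted set
data (`e.restrict (Glist.get k) P`) in which every set data whose index tuples contain the
placeholder `g_k` is replaced by its subset of tuples whose `g_k`-component lies in `P`: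
for every `G* ∈ space(G)` whose `k`-th component `a` lies in `P`, the row tagged `G*`
produced by Algorithm 2 on the restricted data equals the row produced by Algorithm 1 for
`G*`; and for every `G* ∈ space(G)` whose `k`-th component lies outside `P`, Algorithm 2
on the restricted data produces no row tagged `G*` (the zero row). -/
theorem index_partition_eq_data_partition [DecidableEq V] [DecidableEq Var]
    (sp : ℕ → Finset V) (Glist : List ℕ) (hnd : Glist.Nodup)
    (e : GExpr V Var) (hwf : e.wf Glist) (hsum : e.allUnderSum)
    (hcov : e.covers Glist [])
    (k : Fin Glist.length) (P : Finset V) (hP : P ⊆ sp (Glist.get k)) :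
    ∀ Gstar ∈ spaceTuples sp Glist, ∀ a : V, Gstar[(k : ℕ)]? = some a →
      (a ∈ P → ∀ w : Var,
          evalTagged Glist (e.restrict (Glist.get k) P) (fun _ => none) (Gstar.map some) w =
          evalFull e (fullCtx Glist Gstar) w) ∧
      (a ∉ P → ∀ w : Var,
          evalTagged Glist (e.restrict (Glist.get k) P) (fun _ => none) (Gstar.map some) w
            = 0) :=
  index_partition_eq_data_partition_general sp Glist hnd e hwf hcov k P
end

section
/- Parallel correctness of the efficient instantiation algorithm. Let expr_G be a symbolic multidimensional expression satisfying the assumptions of Lemmas 1 and 2, fix an index k ∈ {1,…,N}, and let {P_1,…,P_M} be a partition of space(g_k). For each worker i ∈ {1,…,M}, let the data partition consist of, for every set S_j* whose index tuples contain the placeholder g_k, the subset of tuples of S_j* whose g_k-component lies in P_i. Then: (i) the constraint rows produced by the context-passing instantiation algorithm (Algorithm 2) run by worker i are exactly the rows of the full constraint matrix indexed by global tuples G* with g*_k ∈ P_i; (ii) distinct workers produce rows for disjoint sets of global index tuples; and (iii) the union of the M workers' outputs equals the constraint matrix produced by running Algorithm 2 on the full data S*. -/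
variable {V Var : Type}

/-! Every term emitted by Algorithm 2 is tagged with the context's value of `g_k`, and once
`g_k` is bound it stays bound: a later sum operator either mentions `g_k` among its globals,
and then only tuples agreeing with the context are visited, or does not mention it at all,
local placeholders being disjoint from the globals. So a term lands in row `G*` only if it was
produced in a context binding `g_k` to `G*_k`, and the only tuples the restriction removes are
those binding `g_k` outside `P i`. Hence worker `i` computes row `G*` exactly when
`G*_k ∈ P i` and produces zero otherwise; (ii) and (iii) follow because the `P i` partition
`space(g_k)`. -/

theorem bindCtx_cons (ctx : ℕ → Option V) (n : ℕ) (ns : List ℕ) (v : V) (vs : List V) (g : ℕ) :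
    bindCtx ctx (n :: ns) (v :: vs) g = if n = g then some v else bindCtx ctx ns vs g := by
  by_cases h : n = g <;> simp [bindCtx, h]

theorem bindCtx_of_notMem (ctx : ℕ → Option V) {names : List ℕ} (vals : List V) {g : ℕ}
    (hg : g ∉ names) : bindCtx ctx names vals g = ctx g := by
  induction names generalizing vals with
  | nil => simp [bindCtx]
  | cons n ns ih =>
    cases vals with
    | nil => simp [bindCtx]
    | cons v vs =>
      rw [List.mem_cons, not_or] at hg
      rw [bindCtx_cons, if_neg (Ne.symm hg.1), ih vs hg.2]

theorem bindCtx_of_mem (ctx : ℕ → Option V) {names : List ℕ} {vals : List V} {g : ℕ}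
    (hg : g ∈ names) (hlen : names.length ≤ vals.length) :
    bindCtx ctx names vals g = vals[names.idxOf g]? := by
  induction names generalizing vals with
  | nil => simp at hg
  | cons n ns ih =>
    cases vals with
    | nil => simp at hlen
    | cons v vs =>
      rw [bindCtx_cons]
      by_cases h : n = g
      · rw [if_pos h, List.idxOf_cons_eq _ h, List.getElem?_cons_zero]
      · have hg' : g ∈ ns := (List.mem_cons.mp hg).resolve_left (Ne.symm h)
        rw [if_neg h, List.idxOf_cons_ne _ h, List.getElem?_cons_succ,
          ih hg' (by simpa using hlen)]

theorem bindCtx_append_of_agreesB_s4 [DecidableEq V] {ctx : ℕ → Option V} {names : List ℕ}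
    {vals : List V} (rest : List ℕ) (vals' : List V) {g : ℕ} {b : V}
    (hag : agreesB ctx names vals = true) (hlen : names.length = vals.length) (hg : g ∉ rest)
    (hb : ctx g = some b) : bindCtx ctx (names ++ rest) (vals ++ vals') g = some b := by
  induction names generalizing vals with
  | nil =>
    rw [List.eq_nil_of_length_eq_zero hlen.symm, List.nil_append, List.nil_append,
      bindCtx_of_notMem _ _ hg, hb]
  | cons n ns ih =>
    cases vals with
    | nil => simp at hlen
    | cons v vs =>
      simp only [agreesB, List.zip_cons_cons, List.all_cons, Bool.and_eq_true] at hag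
      rw [List.cons_append, List.cons_append, bindCtx_cons]
      split_ifs with hng
      · subst hng
        simpa [hb] using hag.1
      · exact ih hag.2 (by simpa using hlen)

theorem bindCtx_of_agreesB_take [DecidableEq V] {ctx : ℕ → Option V} {Gk Lk : List ℕ}
    {tup : List V} {g : ℕ} {b : V} (hag : agreesB ctx Gk (tup.take Gk.length) = true)
    (hlen : Gk.length ≤ tup.length) (hg : g ∉ Lk) (hb : ctx g = some b) :
    bindCtx ctx (Gk ++ Lk) tup g = some b := by
  rw [← List.take_append_drop Gk.length tup]
  exact bindCtx_append_of_agreesB_s4 Lk _ hag (by simp [hlen]) hg hb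

section evalTagged

variable [DecidableEq V] [DecidableEq Var] {Glist : List ℕ} {k : ℕ} {tag : List (Option V)}

theorem evalTagged_term_eq_zero (hk : k < Glist.length) (w : Var) {ctx : ℕ → Option V}
    (h : tag[k]? ≠ some (ctx Glist[k])) (c : (ℕ → Option V) → ℚ) (v : (ℕ → Option V) → Var) :
    evalTagged Glist (.term c v) ctx tag w = 0 := by
  simp only [evalTagged]
  rw [if_neg]
  rintro ⟨rfl, -⟩
  simp [hk] at h

theorem evalTagged_eq_zero_of_bound_ne (hk : k < Glist.length) (w : Var) {b : V}
    (hb : tag[k]? ≠ some (some b)) {e : GExpr V Var} (he : e.wf Glist) {ctx : ℕ → Option V} (hctx : ctx Glist[k] = some b) :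
    evalTagged Glist e ctx tag w = 0 := by
  induction e generalizing ctx with
  | term c v => exact evalTagged_term_eq_zero hk w (hctx ▸ hb) c v
  | add l r ihl ihr => simp only [evalTagged, ihl he.1 hctx, ihr he.2 hctx, add_zero]
  | sub l r ihl ihr => simp only [evalTagged, ihl he.1 hctx, ihr he.2 hctx, sub_zero]
  | sum Gk Lk data body ih =>
    obtain ⟨-, hLk, -, -, hlen, hbody⟩ := he
    refine Finset.sum_eq_zero fun tup htup => ih hbody ?_
    rw [Finset.mem_filter] at htup
    exact bindCtx_of_agreesB_take htup.2 (by simp [hlen tup htup.1])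
      (fun h => hLk _ h (List.getElem_mem hk)) hctx

theorem evalTagged_restrict_of_bound {g : ℕ} (hg : g ∈ Glist) {P : Finset V} {c : V}
    (hc : c ∈ P) (w : Var) {e : GExpr V Var} (he : e.wf Glist) {ctx : ℕ → Option V}
    (hctx : ctx g = some c) :
    evalTagged Glist (e.restrict g P) ctx tag w = evalTagged Glist e ctx tag w := by
  induction e generalizing ctx with
  | term => rfl
  | add l r ihl ihr => simp only [GExpr.restrict, evalTagged, ihl he.1 hctx, ihr he.2 hctx]
  | sub l r ihl ihr => simp only [GExpr.restrict, evalTagged, ihl he.1 hctx, ihr he.2 hctx]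
  | sum Gk Lk data body ih =>
    obtain ⟨-, hLk, -, -, hlen, hbody⟩ := he
    have hbind : ∀ tup ∈ data.filter (fun tup => agreesB ctx Gk (tup.take Gk.length) = true),
        bindCtx ctx (Gk ++ Lk) tup g = some c := fun tup htup =>
      bindCtx_of_agreesB_take (Finset.mem_filter.mp htup).2
        (by simp [hlen tup (Finset.mem_filter.mp htup).1]) (fun h => hLk _ h hg) hctx
    rw [GExpr.restrict]
    split_ifs with hin
    · simp only [evalTagged]
      rw [Finset.filter_comm, Finset.filter_true_of_mem]
      · exact Finset.sum_congr rfl fun tup htup => ih hbody (hbind tup htup)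
      · intro tup htup
        rw [← bindCtx_of_mem ctx hin (by simp [hlen tup (Finset.mem_filter.mp htup).1]),
          hbind tup htup]
        simpa using hc
    · exact Finset.sum_congr rfl fun tup htup => ih hbody (hbind tup htup)

theorem evalTagged_restrict_of_unbound (hk : k < Glist.length) (P : Finset V) {a : V}
    (ha : tag[k]? = some (some a)) (w : Var) {e : GExpr V Var} (he : e.wf Glist)
    {ctx : ℕ → Option V} (hctx : ctx Glist[k] = none) :
    evalTagged Glist (e.restrict Glist[k] P) ctx tag w =
      if a ∈ P then evalTagged Glist e ctx tag w else 0 := by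
  induction e generalizing ctx with
  | term c v =>
    rw [GExpr.restrict, evalTagged_term_eq_zero hk w (by simp [ha, hctx]), ite_self]
  | add l r ihl ihr =>
    simp only [GExpr.restrict, evalTagged, ihl he.1 hctx, ihr he.2 hctx]
    split_ifs <;> simp
  | sub l r ihl ihr =>
    simp only [GExpr.restrict, evalTagged, ihl he.1 hctx, ihr he.2 hctx]
    split_ifs <;> simp
  | sum Gk Lk data body ih =>
    obtain ⟨-, -, -, -, hlen, hbody⟩ := he
    by_cases hin : Glist[k] ∈ Gk ++ Lk
    · simp only [GExpr.restrict, if_pos hin, evalTagged]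
      rw [Finset.filter_comm, Finset.sum_filter, Finset.ite_sum_zero]
      refine Finset.sum_congr rfl fun tup htup => ?_
      have htup := hlen tup (Finset.mem_filter.mp htup).1
      have hbind := bindCtx_of_mem ctx hin (vals := tup) (by simp [htup])
      have hidx : (Gk ++ Lk).idxOf Glist[k] < tup.length := by
        simpa [htup] using List.idxOf_lt_length_iff.mpr hin
      obtain ⟨c, hc⟩ : ∃ c, tup[(Gk ++ Lk).idxOf Glist[k]]? = some c :=
        ⟨_, List.getElem?_eq_getElem hidx⟩
      rw [hc] at hbind ⊢
      simp only [Option.any_some, decide_eq_true_eq]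
      -- The tuple binds `g_k` to `c`, and the body then contributes to row `tag` only if
      -- `c = a`; so keeping the tuple iff `c ∈ P` is the same as testing `a ∈ P`.
      by_cases hca : c = a
      · subst hca
        split_ifs with hcP
        · exact evalTagged_restrict_of_bound (List.getElem_mem hk) hcP w hbody hbind
        · rfl
      · have h0 : evalTagged Glist body (bindCtx ctx (Gk ++ Lk) tup) tag w = 0 :=
          evalTagged_eq_zero_of_bound_ne hk w (by simpa [ha] using Ne.symm hca) hbody hbind
        rw [h0, ite_self]
        split_ifs with hcP
        · exact (evalTagged_restrict_of_bound (List.getElem_mem hk) hcP w hbody hbind).trans h0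
        · rfl
    · simp only [GExpr.restrict, if_neg hin, evalTagged]
      rw [Finset.ite_sum_zero]
      exact Finset.sum_congr rfl fun tup _ => ih hbody (by rw [bindCtx_of_notMem _ _ hin, hctx])

end evalTagged

theorem mem_spaceTuples_iff [DecidableEq V] {sp : ℕ → Finset V} {names : List ℕ} {l : List V} :
    l ∈ spaceTuples sp names ↔ List.Forall₂ (fun v g => v ∈ sp g) l names := by
  induction names generalizing l with
  | nil => simp [spaceTuples]
  | cons g gs ih => simp [spaceTuples, ih, List.forall₂_cons_right_iff, and_assoc, eq_comm]

theorem exists_getElem?_of_mem_spaceTuples [DecidableEq V] {sp : ℕ → Finset V}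
    {names : List ℕ} {l : List V} (hl : l ∈ spaceTuples sp names) {k : ℕ}
    (hk : k < names.length) : ∃ a ∈ sp names[k], l[k]? = some a := by
  obtain ⟨hlen, hget⟩ := List.forall₂_iff_get.mp (mem_spaceTuples_iff.mp hl)
  exact ⟨l[k], hget k (hlen ▸ hk) hk, List.getElem?_eq_getElem _⟩

theorem parallel_instantiation_correct_general [DecidableEq V] [DecidableEq Var]
    (sp : ℕ → Finset V) (Glist : List ℕ)
    (e : GExpr V Var) (hwf : e.wf Glist)
    (k : Fin Glist.length) (M : ℕ) (P : Fin M → Finset V)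
    (hdisj : ∀ i j : Fin M, i ≠ j → Disjoint (P i) (P j))
    (hcover : (Finset.univ : Finset (Fin M)).biUnion P = sp (Glist.get k)) :
    (∀ i : Fin M, ∀ Gstar ∈ spaceTuples sp Glist, ∀ a : V, Gstar[(k : ℕ)]? = some a →
        (a ∈ P i → ∀ w : Var,
            evalTagged Glist (e.restrict (Glist.get k) (P i)) (fun _ => none)
                (Gstar.map some) w =
              evalTagged Glist e (fun _ => none) (Gstar.map some) w) ∧
        (a ∉ P i → ∀ w : Var,
            evalTagged Glist (e.restrict (Glist.get k) (P i)) (fun _ => none)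
                (Gstar.map some) w = 0)) ∧
    (∀ i j : Fin M, i ≠ j → ∀ Gstar ∈ spaceTuples sp Glist,
        (∃ w : Var,
            evalTagged Glist (e.restrict (Glist.get k) (P i)) (fun _ => none)
              (Gstar.map some) w ≠ 0) →
        ∀ w : Var,
          evalTagged Glist (e.restrict (Glist.get k) (P j)) (fun _ => none)
            (Gstar.map some) w = 0) ∧
    (∀ Gstar ∈ spaceTuples sp Glist, ∀ w : Var,
        ∑ i : Fin M,
            evalTagged Glist (e.restrict (Glist.get k) (P i)) (fun _ => none)
              (Gstar.map some) w =
          evalTagged Glist e (fun _ => none) (Gstar.map some) w) := by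
  simp only [List.get_eq_getElem] at hcover ⊢
  have worker : ∀ i (Gstar : List V) a, Gstar[(k : ℕ)]? = some a → ∀ w,
      evalTagged Glist (e.restrict Glist[(k : ℕ)] (P i)) (fun _ => none) (Gstar.map some) w =
        if a ∈ P i then evalTagged Glist e (fun _ => none) (Gstar.map some) w else 0 :=
    fun i Gstar a ha w => evalTagged_restrict_of_unbound k.isLt (P i) (by simp [ha]) w hwf rfl
  refine ⟨fun i Gstar _ a ha => ⟨fun haP w => ?_, fun haP w => ?_⟩, ?_, ?_⟩
  · rw [worker i Gstar a ha, if_pos haP]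
  · rw [worker i Gstar a ha, if_neg haP]
  · rintro i j hij Gstar hG ⟨w₀, hw₀⟩ w
    obtain ⟨a, -, ha⟩ := exists_getElem?_of_mem_spaceTuples hG k.isLt
    have hai : a ∈ P i := by
      by_contra h
      exact hw₀ (by rw [worker i Gstar a ha, if_neg h])
    rw [worker j Gstar a ha, if_neg (Finset.disjoint_left.mp (hdisj i j hij) hai)]
  · intro Gstar hG w
    obtain ⟨a, hsp, ha⟩ := exists_getElem?_of_mem_spaceTuples hG k.isLt
    obtain ⟨i₀, -, hi₀⟩ := Finset.mem_biUnion.mp (hcover ▸ hsp)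
    rw [Finset.sum_eq_single_of_mem i₀ (Finset.mem_univ _) fun j _ hj => ?_,
      worker i₀ Gstar a ha, if_pos hi₀]
    rw [worker j Gstar a ha, if_neg fun h => Finset.disjoint_left.mp (hdisj j i₀ hj) h hi₀]

/-- **Parallel correctness of the efficient instantiation algorithm.**  Let `e` be a
symbolic multidimensional expression with global placeholder tuple `Glist` satisfying the
assumptions of Lemmas 1 and 2 (`e.allUnderSum`, `e.covers Glist []`, well-formedness
`e.wf Glist`).  Fix a position `k` of the global tuple (placeholder `g_k = Glist.get k`)
and let `P 1, …, P M` be a partition of `space(g_k) = sp (Glist.get k)` into pairwise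
disjoint subsets.  Worker `i` runs the context-passing instantiation algorithm
(Algorithm 2) on the data partition `e.restrict (Glist.get k) (P i)` in which every set
data whose index tuples contain `g_k` is replaced by its subset of tuples whose
`g_k`-component lies in `P i`.  Then:
(i) the constraint rows produced by worker `i` are exactly the rows of the full constraint
matrix indexed by global tuples `G*` with `G*_k ∈ P i` (and worker `i` produces zero rows
for tuples with `G*_k ∉ P i`);
(ii) distinct workers produce (nonzero) rows for disjoint sets of global index tuples; and
(iii) the union (sum) of the `M` workers' outputs equals the constraint matrix produced by
running Algorithm 2 on the full data. -/
theorem parallel_instantiation_correct [DecidableEq V] [DecidableEq Var]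
    (sp : ℕ → Finset V) (Glist : List ℕ) (hnd : Glist.Nodup)
    (e : GExpr V Var) (hwf : e.wf Glist) (hsum : e.allUnderSum)
    (hcov : e.covers Glist [])
    (k : Fin Glist.length) (M : ℕ) (P : Fin M → Finset V)
    (hdisj : ∀ i j : Fin M, i ≠ j → Disjoint (P i) (P j))
    (hcover : (Finset.univ : Finset (Fin M)).biUnion P = sp (Glist.get k)) :
    (∀ i : Fin M, ∀ Gstar ∈ spaceTuples sp Glist, ∀ a : V, Gstar[(k : ℕ)]? = some a →
        (a ∈ P i → ∀ w : Var,
            evalTagged Glist (e.restrict (Glist.get k) (P i)) (fun _ => none)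
                (Gstar.map some) w =
              evalTagged Glist e (fun _ => none) (Gstar.map some) w) ∧
        (a ∉ P i → ∀ w : Var,
            evalTagged Glist (e.restrict (Glist.get k) (P i)) (fun _ => none)
                (Gstar.map some) w = 0)) ∧
    (∀ i j : Fin M, i ≠ j → ∀ Gstar ∈ spaceTuples sp Glist,
        (∃ w : Var,
            evalTagged Glist (e.restrict (Glist.get k) (P i)) (fun _ => none)
              (Gstar.map some) w ≠ 0) →
        ∀ w : Var,
          evalTagged Glist (e.restrict (Glist.get k) (P j)) (fun _ => none)
            (Gstar.map some) w = 0) ∧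
    (∀ Gstar ∈ spaceTuples sp Glist, ∀ w : Var,
        ∑ i : Fin M,
            evalTagged Glist (e.restrict (Glist.get k) (P i)) (fun _ => none)
              (Gstar.map some) w =
          evalTagged Glist e (fun _ => none) (Gstar.map some) w) :=
  parallel_instantiation_correct_general sp Glist e hwf k M P hdisj hcover
end
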